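/- Let E be an edge constraint and Γ a set of configurations such that every member of Γ satisfies the universal quantifier w.r.t. E and every singleton configuration satisfying the universal quantifier w.r.t. E is dominated by some member of Γ. Then every configuration C, all of whose sets are nonempty, that satisfies the universal quantifier w.r.t. E and is not strictly dominated by any configuration (all of whose sets are nonempty) satisfying the universal quantifier w.r.t. E, belongs to the combination-closure of Γ. (All maximal configurations can be built by combining input configurations.) -/

import Mathlib

namespace RoundElim

/-- The configuration (multiset of cardinality `δ`) associated to a function `Fin δ → α`. -/
def ofFn {α : Type*} {δ : ℕ} (f : Fin δ → α) : Multiset α :=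
  (List.ofFn f : List α)

variable {σ : Type*} [DecidableEq σ]

/-- `DominatedBy A B` means: configuration `B` dominates configuration `A`. -/
def DominatedBy (A B : Multiset (Finset σ)) : Prop :=
  Multiset.Rel (· ⊆ ·) A B

/-- `StrictlyDominatedBy A B` means: configuration `B` strictly dominates configuration `A`. -/
def StrictlyDominatedBy (A B : Multiset (Finset σ)) : Prop :=
  DominatedBy A B ∧ ¬ DominatedBy B A

/-- The combination of the representatives `a`, `b` with respect to the permutation `φ`
and the index `u`: union at position `u`, intersection everywhere else. -/
def combineFn {δ : ℕ} (a b : Fin δ → Finset σ) (φ : Equiv.Perm (Fin δ)) (u : Fin δ) :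
    Fin δ → Finset σ :=
  fun i => if i = u then a i ∪ b (φ i) else a i ∩ b (φ i)

/-- `C` is a combination of the configurations `A` and `B`. -/
def IsCombination (δ : ℕ) (C A B : Multiset (Finset σ)) : Prop :=
  ∃ (a b : Fin δ → Finset σ) (φ : Equiv.Perm (Fin δ)) (u : Fin δ),
    ofFn a = A ∧ ofFn b = B ∧ ofFn (combineFn a b φ u) = C

/-- `C` satisfies the universal quantifier w.r.t. the edge constraint `E`. -/
def SatUQ (E : Set (Multiset σ)) (C : Multiset (Finset σ)) : Prop :=
  ∀ M : Multiset σ, Multiset.Rel (· ∈ ·) M C → M ∈ E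

/-- A singleton configuration: all its sets have exactly one element. -/
def IsSingletonConfig (C : Multiset (Finset σ)) : Prop :=
  ∀ s ∈ C, s.card = 1

/-- The combination-closure of a set `Γ` of configurations: the smallest set containing `Γ`
and containing every combination of two of its members. -/
inductive CombClosure (δ : ℕ) (Γ : Set (Multiset (Finset σ))) :
    Multiset (Finset σ) → Prop
  | base {C : Multiset (Finset σ)} : C ∈ Γ → CombClosure δ Γ C
  | comb {A B C : Multiset (Finset σ)} : CombClosure δ Γ A → CombClosure δ Γ B →
      IsCombination δ C A B → CombClosure δ Γ C

end RoundElim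

/-!
By induction on the total size, every configuration `A` with nonempty sets satisfying the
universal quantifier is dominated by a member of the combination-closure that satisfies it too.
If `A` is not a singleton configuration, split one of its sets `s ∋ x` into `{x}` and `s \ {x}`:
the two smaller configurations are dominated by members `A₁`, `A₂` of the closure, and the
combination of `A₁` and `A₂` taking the union at the position of `s` dominates `A`. It satisfies
the universal quantifier because a choice from it is a choice from `A₁` or from `A₂`, according
to where its entry at the union position lies. A maximal `C` is then equal to the member
dominating it, since domination is antisymmetric.
-/

protected theorem Multiset.Rel.comp {α β γ : Type*} {r : α → β → Prop} {p : β → γ → Prop}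
    {q : α → γ → Prop} {s : Multiset α} {t : Multiset β} {u : Multiset γ}
    (hst : s.Rel r t) (htu : t.Rel p u) (hq : ∀ a b c, r a b → p b c → q a c) : s.Rel q u := by
  induction hst generalizing u with
  | zero => rw [Multiset.rel_zero_left.mp htu]; exact .zero
  | @cons a b s t hab _ ih =>
    obtain ⟨c, u', hbc, htu', rfl⟩ := Multiset.rel_cons_left.mp htu
    exact .cons (hq a b c hab hbc) (ih htu')

namespace RoundElim

section OfFn

variable {α β : Type*} {δ : ℕ}

lemma ofFn_eq_map_univ (f : Fin δ → α) : ofFn f = Finset.univ.val.map f :=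
  (Fin.univ_val_map f).symm

@[simp]
lemma card_ofFn (f : Fin δ → α) : Multiset.card (ofFn f) = δ := by
  simp [ofFn]

lemma mem_ofFn {f : Fin δ → α} {x : α} : x ∈ ofFn f ↔ ∃ i, f i = x := by
  simp [ofFn_eq_map_univ]

lemma ofFn_comp_perm (f : Fin δ → α) (φ : Equiv.Perm (Fin δ)) : ofFn (f ∘ φ) = ofFn f := by
  rw [ofFn_eq_map_univ, ofFn_eq_map_univ, ← Multiset.map_map, Multiset.map_univ_val_equiv]

lemma exists_ofFn_eq {M : Multiset α} (hM : Multiset.card M = δ) : ∃ f : Fin δ → α, ofFn f = M := by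
  induction M using Quotient.inductionOn with
  | h l =>
    obtain rfl : l.length = δ := hM
    exact ⟨l.get, by simp [ofFn, List.ofFn_get]⟩

lemma rel_ofFn_of_forall {r : α → β → Prop} {f : Fin δ → α} {g : Fin δ → β}
    (h : ∀ i, r (f i) (g i)) : (ofFn f).Rel r (ofFn g) := by
  rw [ofFn_eq_map_univ, ofFn_eq_map_univ, Multiset.rel_map]
  exact Multiset.rel_refl_of_refl_on fun i _ => h i

lemma exists_ofFn_eq_of_rel_ofFn {r : α → β → Prop} :
    ∀ {δ : ℕ} {M : Multiset α} {g : Fin δ → β}, M.Rel r (ofFn g) →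
      ∃ f : Fin δ → α, (∀ i, r (f i) (g i)) ∧ ofFn f = M
  | 0, M, _, h => ⟨Fin.elim0, Fin.rec0, by simp_all [ofFn]⟩
  | _ + 1, M, g, h => by
    rw [ofFn, List.ofFn_succ, ← Multiset.cons_coe, Multiset.rel_cons_right] at h
    obtain ⟨a, M', ha, hM', rfl⟩ := h
    obtain ⟨f, hf, rfl⟩ := exists_ofFn_eq_of_rel_ofFn hM'
    exact ⟨Fin.cons a f, Fin.cases ha hf, by simp [ofFn, List.ofFn_succ]⟩

lemma exists_ofFn_eq_of_ofFn_rel {r : α → β → Prop} {f : Fin δ → α} {N : Multiset β}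
    (h : (ofFn f).Rel r N) : ∃ g : Fin δ → β, (∀ i, r (f i) (g i)) ∧ ofFn g = N :=
  exists_ofFn_eq_of_rel_ofFn (r := flip r) (Multiset.rel_flip.mpr h)

end OfFn

variable {σ : Type*} {δ : ℕ}

section Domination

def totalCard (A : Multiset (Finset σ)) : ℕ := (A.map Finset.card).sum

lemma totalCard_ofFn (f : Fin δ → Finset σ) : totalCard (ofFn f) = ∑ i, (f i).card := by
  rw [totalCard, ofFn_eq_map_univ, Multiset.map_map]
  rfl

variable {A B : Multiset (Finset σ)}

lemma DominatedBy.totalCard_le (h : DominatedBy A B) : totalCard A ≤ totalCard B := by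
  induction h with
  | zero => rfl
  | cons hab _ ih =>
    simpa [totalCard] using Nat.add_le_add (Finset.card_le_card hab) ih

lemma DominatedBy.eq_of_totalCard_le (h : DominatedBy A B) (hle : totalCard B ≤ totalCard A) :
    A = B := by
  induction h with
  | zero => rfl
  | @cons a b as bs hab hrel ih =>
    have hcard : a.card ≤ b.card := Finset.card_le_card hab
    have hrest : totalCard as ≤ totalCard bs := DominatedBy.totalCard_le hrel
    simp only [totalCard, Multiset.map_cons, Multiset.sum_cons] at hle hrest
    rw [Finset.eq_of_subset_of_card_le hab (by omega), ih (by simp only [totalCard]; omega)]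

lemma DominatedBy.antisymm (hAB : DominatedBy A B) (hBA : DominatedBy B A) : A = B :=
  hAB.eq_of_totalCard_le hBA.totalCard_le

lemma DominatedBy.card_eq (h : DominatedBy A B) : Multiset.card A = Multiset.card B :=
  Multiset.card_eq_card_of_rel h

lemma DominatedBy.nonempty (h : DominatedBy A B) (hA : ∀ s ∈ A, s.Nonempty) :
    ∀ t ∈ B, t.Nonempty := by
  intro t ht
  obtain ⟨s, hs, hst⟩ := Multiset.exists_mem_of_rel_of_mem (Multiset.rel_flip.mpr h) ht
  exact (hA s hs).mono hst

lemma dominatedBy_ofFn_update {c : Fin δ → Finset σ} {u : Fin δ} {t : Finset σ} (ht : t ⊆ c u) :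
    DominatedBy (ofFn (Function.update c u t)) (ofFn c) :=
  rel_ofFn_of_forall fun i => by
    rcases eq_or_ne i u with rfl | hi
    · simpa using ht
    · simp [hi]

lemma nonempty_of_mem_ofFn_update {c : Fin δ → Finset σ} (hc : ∀ s ∈ ofFn c, s.Nonempty)
    {u : Fin δ} {t : Finset σ} (ht : t.Nonempty) :
    ∀ s ∈ ofFn (Function.update c u t), s.Nonempty := by
  simp only [mem_ofFn, forall_exists_index, forall_apply_eq_imp_iff]
  intro i
  rcases eq_or_ne i u with rfl | hi
  · simpa using ht
  · simpa [hi] using hc _ (mem_ofFn.mpr ⟨i, rfl⟩)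

lemma totalCard_ofFn_update_lt {c : Fin δ → Finset σ} {u : Fin δ} {t : Finset σ}
    (ht : t ⊂ c u) : totalCard (ofFn (Function.update c u t)) < totalCard (ofFn c) := by
  rw [totalCard_ofFn, totalCard_ofFn]
  refine Finset.sum_lt_sum (fun i _ => ?_)
    ⟨u, Finset.mem_univ u, by simpa using Finset.card_lt_card ht⟩
  rcases eq_or_ne i u with rfl | hi
  · simpa using Finset.card_le_card ht.subset
  · simp [hi]

end Domination

section Combination

variable {E : Set (Multiset σ)}

lemma SatUQ.of_dominatedBy {A B : Multiset (Finset σ)} (hB : SatUQ E B) (h : DominatedBy A B) :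
    SatUQ E A := fun M hM =>
  hB M (hM.comp h fun _ _ _ hx hst => hst hx)

lemma SatUQ.combineFn [DecidableEq σ] {a b : Fin δ → Finset σ} (ha : SatUQ E (ofFn a))
    (hb : SatUQ E (ofFn b)) (φ : Equiv.Perm (Fin δ)) (u : Fin δ) :
    SatUQ E (ofFn (combineFn a b φ u)) := by
  intro M hM
  obtain ⟨m, hm, rfl⟩ := exists_ofFn_eq_of_rel_ofFn hM
  have hm_ne : ∀ i ≠ u, m i ∈ a i ∧ m i ∈ b (φ i) := fun i hi => by
    simpa [RoundElim.combineFn, hi] using hm i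
  have hm_u : m u ∈ a u ∨ m u ∈ b (φ u) := by simpa [RoundElim.combineFn] using hm u
  rcases hm_u with hu | hu
  · refine ha _ (rel_ofFn_of_forall fun i => ?_)
    rcases eq_or_ne i u with rfl | hi
    exacts [hu, (hm_ne i hi).1]
  · have hmb : ∀ i, m i ∈ b (φ i) := fun i => by
      rcases eq_or_ne i u with rfl | hi
      exacts [hu, (hm_ne i hi).2]
    rw [← ofFn_comp_perm m φ.symm]
    exact hb _ (rel_ofFn_of_forall fun i => by simpa using hmb (φ.symm i))

lemma update_union_subset_combineFn_one [DecidableEq σ] {a b c : Fin δ → Finset σ} {u : Fin δ}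
    {s₁ s₂ : Finset σ} (ha : ∀ i, Function.update c u s₁ i ⊆ a i)
    (hb : ∀ i, Function.update c u s₂ i ⊆ b i) (i : Fin δ) :
    Function.update c u (s₁ ∪ s₂) i ⊆ combineFn a b 1 u i := by
  have ha' := ha i
  have hb' := hb i
  rcases eq_or_ne i u with rfl | hi
  · simp only [Function.update_self] at ha' hb'
    simpa [combineFn] using Finset.union_subset_union ha' hb'
  · simp only [Function.update_of_ne hi] at ha' hb' ⊢
    simpa [combineFn, hi] using Finset.subset_inter ha' hb'

end Combination

theorem exists_combClosure_dominatedBy [DecidableEq σ] {E : Set (Multiset σ)}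
    {Γ : Set (Multiset (Finset σ))} (hΓuq : ∀ A ∈ Γ, SatUQ E A)
    (hΓsing : ∀ M : Multiset (Finset σ), Multiset.card M = δ → IsSingletonConfig M →
      SatUQ E M → ∃ A ∈ Γ, DominatedBy M A)
    {A : Multiset (Finset σ)} (hcard : Multiset.card A = δ) (hne : ∀ s ∈ A, s.Nonempty)
    (huq : SatUQ E A) : ∃ A', CombClosure δ Γ A' ∧ DominatedBy A A' ∧ SatUQ E A' := by
  induction hw : totalCard A using Nat.strong_induction_on generalizing A with
  | _ n ih =>
    by_cases hsing : IsSingletonConfig A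
    · obtain ⟨A', hA', hdom⟩ := hΓsing A hcard hsing huq
      exact ⟨A', .base hA', hdom, hΓuq A' hA'⟩
    obtain ⟨c, rfl⟩ := exists_ofFn_eq hcard
    obtain ⟨_, hs, hs_card⟩ : ∃ s ∈ ofFn c, s.card ≠ 1 := by
      simpa [IsSingletonConfig] using hsing
    obtain ⟨u, rfl⟩ := mem_ofFn.mp hs
    have hu : (c u).Nontrivial :=
      Finset.one_lt_card_iff_nontrivial.mp (by have := (hne _ hs).card_pos; omega)
    obtain ⟨x, hx⟩ := hne _ hs
    have hsplit : ∀ t, t ⊂ c u → t.Nonempty → ∃ a, CombClosure δ Γ (ofFn a) ∧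
        (∀ i, Function.update c u t i ⊆ a i) ∧ SatUQ E (ofFn a) := by
      intro t hts ht
      have hdom := dominatedBy_ofFn_update hts.subset
      obtain ⟨A', hA', hdom', huq'⟩ := ih _ (hw ▸ totalCard_ofFn_update_lt hts) (card_ofFn _)
        (nonempty_of_mem_ofFn_update hne ht) (huq.of_dominatedBy hdom) rfl
      obtain ⟨a, ha, rfl⟩ := exists_ofFn_eq_of_ofFn_rel hdom'
      exact ⟨a, hA', ha, huq'⟩
    have hx_sub : {x} ⊆ c u := Finset.singleton_subset_iff.mpr hx
    obtain ⟨a, ha_cl, ha, ha_uq⟩ := hsplit {x}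
      (Finset.ssubset_iff_subset_ne.mpr ⟨hx_sub, hu.ne_singleton.symm⟩)
      (Finset.singleton_nonempty x)
    obtain ⟨b, hb_cl, hb, hb_uq⟩ := hsplit (c u \ {x})
      (Finset.sdiff_ssubset hx_sub (Finset.singleton_nonempty x)) hu.sdiff_singleton_nonempty
    refine ⟨_, .comb ha_cl hb_cl ⟨a, b, 1, u, rfl, rfl, rfl⟩, ?_, ha_uq.combineFn hb_uq 1 u⟩
    have hdom := update_union_subset_combineFn_one ha hb
    rw [Finset.union_sdiff_of_subset hx_sub, Function.update_eq_self] at hdom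
    exact rel_ofFn_of_forall hdom

theorem maximal_in_closure_general {σ : Type*} [DecidableEq σ] (δ : ℕ)
    (E : Set (Multiset σ)) (Γ : Set (Multiset (Finset σ)))
    (hΓuq : ∀ A ∈ Γ, SatUQ E A)
    (hΓsing : ∀ M : Multiset (Finset σ), Multiset.card M = δ → IsSingletonConfig M →
      SatUQ E M → ∃ A ∈ Γ, DominatedBy M A)
    (C : Multiset (Finset σ)) (hCcard : Multiset.card C = δ)
    (hCne : ∀ s ∈ C, s.Nonempty) (hCuq : SatUQ E C)
    (hCmax : ¬ ∃ C' : Multiset (Finset σ), Multiset.card C' = δ ∧ (∀ s ∈ C', s.Nonempty) ∧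
      SatUQ E C' ∧ StrictlyDominatedBy C C') :
    CombClosure δ Γ C := by
  obtain ⟨C', hC', hdom, huq'⟩ := exists_combClosure_dominatedBy hΓuq hΓsing hCcard hCne hCuq
  have hback : DominatedBy C' C := by
    by_contra hback
    exact hCmax ⟨C', hdom.card_eq ▸ hCcard, hdom.nonempty hCne, huq', hdom, hback⟩
  rwa [hdom.antisymm hback]

/-- All maximal configurations can be built by combining input configurations: if every member
of `Γ` satisfies the universal quantifier w.r.t. `E` and every singleton configuration
satisfying the universal quantifier is dominated by some member of `Γ`, then every
configuration with nonempty sets that satisfies the universal quantifier and is not strictly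
dominated by any such configuration belongs to the combination-closure of `Γ`. -/
theorem maximal_in_closure {σ : Type*} [Fintype σ] [DecidableEq σ] (δ : ℕ) (hδ : 0 < δ)
    (E : Set (Multiset σ)) (Γ : Set (Multiset (Finset σ)))
    (hΓuq : ∀ A ∈ Γ, SatUQ E A)
    (hΓsing : ∀ M : Multiset (Finset σ), Multiset.card M = δ → IsSingletonConfig M →
      SatUQ E M → ∃ A ∈ Γ, DominatedBy M A)
    (C : Multiset (Finset σ)) (hCcard : Multiset.card C = δ)
    (hCne : ∀ s ∈ C, s.Nonempty) (hCuq : SatUQ E C)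
    (hCmax : ¬ ∃ C' : Multiset (Finset σ), Multiset.card C' = δ ∧ (∀ s ∈ C', s.Nonempty) ∧
      SatUQ E C' ∧ StrictlyDominatedBy C C') :
    CombClosure δ Γ C :=
  maximal_in_closure_general δ E Γ hΓuq hΓsing C hCcard hCne hCuq hCmax

end RoundElim
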